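/- arXiv:2412.12655 — 5 statements merged into one kernel-verified Lean document; each statement's English description precedes it below -/
import Mathlib

section
/- Let r_n := (2/π) ∫_0^{π/2} sin(nx)² / (sin x · √(4 − cos(x)²)) dx. Then r_0 = 0, r_1 = 1/3, and for every integer n ≥ 2 one has r_n = ((15n−22)/(n−1))·r_{n−1} − ((15n−23)/(n−1))·r_{n−2} + ((n−2)/(n−1))·r_{n−3} − 4√3/(π(n−1)), where for n = 2 the term r_{n−3} has coefficient (n−2)/(n−1) = 0 (convention r_{−1} := 0). -/
open Real intervalIntegral

/-- The two-point resistance `R(n,n)` of the infinite triangular resistor lattice,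
extended by `0` for negative indices. -/
noncomputable def triRes (n : ℤ) : ℝ :=
  if 0 ≤ n then
    (2 / π) * ∫ x in (0:ℝ)..(π / 2),
      Real.sin (n * x) ^ 2 / (Real.sin x * Real.sqrt (4 - Real.cos x ^ 2))
  else 0

/-!
With `w x = √(4 - cos x ^ 2)` and `f ν x = sin (ν x) ^ 2 / (sin x * w x)`, the identity
`sin² (ν x) - sin² ((ν - 1) x) = sin ((2ν - 1) x) sin x` cancels the singular factor `sin x`
from consecutive differences of `f`. The combination
`(ν - 1) f ν - (15ν - 22) f (ν - 1) + (15ν - 23) f (ν - 2) - (ν - 2) f (ν - 3)` has coefficients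
summing to zero, so it is a sum of such differences, and it turns out to be exactly the
derivative of `2 cos ((2ν - 3) x) w x`. For integer `ν` this primitive vanishes at `π / 2` and
equals `2√3` at `0`.
-/

noncomputable def triKernel (ν x : ℝ) : ℝ :=
  sin (ν * x) ^ 2 / (sin x * √(4 - cos x ^ 2))

lemma triRes_of_nonneg {n : ℤ} (hn : 0 ≤ n) :
    triRes n = 2 / π * ∫ x in (0:ℝ)..π / 2, triKernel n x :=
  if_pos hn

lemma one_le_sqrt_four_sub_cos_sq (x : ℝ) : 1 ≤ √(4 - cos x ^ 2) :=
  Real.one_le_sqrt.mpr (by nlinarith [cos_sq_le_one x])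

lemma sqrt_four_sub_cos_sq_pos (x : ℝ) : 0 < √(4 - cos x ^ 2) :=
  one_pos.trans_le (one_le_sqrt_four_sub_cos_sq x)

lemma continuous_sqrt_four_sub_cos_sq : Continuous fun x => √(4 - cos x ^ 2) := by
  fun_prop

lemma intervalIntegrable_triKernel (ν : ℝ) :
    IntervalIntegrable (triKernel ν) MeasureTheory.volume 0 (π / 2) := by
  refine (intervalIntegrable_const (c := π ^ 2 * ν ^ 2 / 4)).mono_fun' ?_ ?_
  · have hmeas : Measurable (triKernel ν) := by unfold triKernel; fun_prop
    exact hmeas.aestronglyMeasurable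
  · rw [Set.uIoc_of_le (by positivity)]
    refine (MeasureTheory.ae_restrict_iff' measurableSet_Ioc).mpr
      (.of_forall fun x ⟨hx0, hx⟩ => ?_)
    have hsin : 2 / π * x ≤ sin x := mul_le_sin hx0.le hx
    have hw := one_le_sqrt_four_sub_cos_sq x
    have hnum : sin (ν * x) ^ 2 ≤ ν ^ 2 * x ^ 2 := by rw [← mul_pow]; exact sin_sq_le_sq
    have hxπ : 0 < 2 / π * x := by positivity
    have hsin0 : 0 < sin x := hxπ.trans_le hsin
    have hden : 0 < sin x * √(4 - cos x ^ 2) := by positivity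
    change ‖sin (ν * x) ^ 2 / (sin x * √(4 - cos x ^ 2))‖ ≤ π ^ 2 * ν ^ 2 / 4
    rw [Real.norm_of_nonneg (div_nonneg (sq_nonneg _) hden.le), div_le_iff₀ hden]
    calc sin (ν * x) ^ 2 ≤ ν ^ 2 * x * (π / 2) := by nlinarith [sq_nonneg ν]
      _ = π ^ 2 * ν ^ 2 / 4 * (2 / π * x) := by field_simp; ring
      _ ≤ π ^ 2 * ν ^ 2 / 4 * (sin x * √(4 - cos x ^ 2)) :=
        mul_le_mul_of_nonneg_left (hsin.trans (le_mul_of_one_le_right hsin0.le hw))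
          (by positivity)

lemma sin_sq_sub_sin_sq (a b : ℝ) : sin a ^ 2 - sin b ^ 2 = sin (a + b) * sin (a - b) := by
  rw [sin_add, sin_sub]
  linear_combination sin b ^ 2 * sin_sq_add_cos_sq a - sin a ^ 2 * sin_sq_add_cos_sq b

lemma triKernel_sub_triKernel_sub_one (ν : ℝ) {x : ℝ} (hx : sin x ≠ 0) :
    triKernel ν x - triKernel (ν - 1) x = sin ((2 * ν - 1) * x) / √(4 - cos x ^ 2) := by
  have hw := (sqrt_four_sub_cos_sq_pos x).ne'
  rw [triKernel, triKernel, ← sub_div, sin_sq_sub_sin_sq]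
  field_simp
  ring_nf

lemma triKernel_recurrence_combination (ν : ℝ) {x : ℝ} (hx : sin x ≠ 0) :
    (ν - 1) * triKernel ν x - (15 * ν - 22) * triKernel (ν - 1) x
        + (15 * ν - 23) * triKernel (ν - 2) x - (ν - 2) * triKernel (ν - 3) x
      = ((2 * ν - 3) * sin ((2 * ν - 3) * x) * (cos (2 * x) - 7)
          + cos ((2 * ν - 3) * x) * sin (2 * x)) / √(4 - cos x ^ 2) := by
  have h₁ := triKernel_sub_triKernel_sub_one ν hx
  have h₂ := triKernel_sub_triKernel_sub_one (ν - 1) hx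
  have h₃ := triKernel_sub_triKernel_sub_one (ν - 2) hx
  rw [show ν - 1 - 1 = ν - 2 by ring] at h₂
  rw [show ν - 2 - 1 = ν - 3 by ring] at h₃
  have hadd : sin ((2 * ν - 1) * x) = sin ((2 * ν - 3) * x + 2 * x) := by ring_nf
  have hsub : sin ((2 * (ν - 2) - 1) * x) = sin ((2 * ν - 3) * x - 2 * x) := by ring_nf
  have hmid : sin ((2 * (ν - 1) - 1) * x) = sin ((2 * ν - 3) * x) := by ring_nf
  rw [hadd, sin_add] at h₁
  rw [hsub, sin_sub] at h₃
  rw [hmid] at h₂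
  linear_combination (ν - 1) * h₁ - (14 * ν - 21) * h₂ + (ν - 2) * h₃

lemma hasDerivAt_cos_mul_mul_sqrt_four_sub_cos_sq (m x : ℝ) :
    HasDerivAt (fun y => 2 * cos (m * y) * √(4 - cos y ^ 2))
      ((m * sin (m * x) * (cos (2 * x) - 7) + cos (m * x) * sin (2 * x))
        / √(4 - cos x ^ 2)) x := by
  have hpos : 0 < 4 - cos x ^ 2 := by nlinarith [cos_sq_le_one x]
  have hcos := ((hasDerivAt_id' x).const_mul m).cos
  have hsqrt := (((hasDerivAt_cos x).fun_pow 2).const_sub 4).sqrt hpos.ne'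
  refine ((hcos.const_mul 2).mul hsqrt).congr_deriv ?_
  have hw : √(4 - cos x ^ 2) ^ 2 = 4 - cos x ^ 2 := sq_sqrt hpos.le
  rw [cos_two_mul, sin_two_mul]
  field_simp
  linear_combination (-2 * m * sin (m * x)) * hw

lemma integral_triKernel_recurrence_combination (n : ℤ) :
    ((n - 1) * ∫ x in (0:ℝ)..π / 2, triKernel n x)
        - (15 * n - 22) * (∫ x in (0:ℝ)..π / 2, triKernel (n - 1) x)
        + (15 * n - 23) * (∫ x in (0:ℝ)..π / 2, triKernel (n - 2) x)
        - (n - 2) * (∫ x in (0:ℝ)..π / 2, triKernel (n - 3) x)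
      = -2 * √3 := by
  have hI := intervalIntegrable_triKernel
  rw [← integral_const_mul, ← integral_const_mul, ← integral_const_mul, ← integral_const_mul,
    ← integral_sub ((hI _).const_mul _) ((hI _).const_mul _),
    ← integral_add (((hI _).const_mul _).sub ((hI _).const_mul _)) ((hI _).const_mul _),
    ← integral_sub ((((hI _).const_mul _).sub ((hI _).const_mul _)).add ((hI _).const_mul _))
      ((hI _).const_mul _)]
  have hpos : ∀ᵐ x, x ∈ Set.uIoc 0 (π / 2) → 0 < sin x := by
    refine .of_forall fun x hx => ?_
    rw [Set.uIoc_of_le (by positivity)] at hx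
    exact sin_pos_of_pos_of_lt_pi hx.1 (by linarith [hx.2, pi_pos])
  rw [integral_congr_ae (hpos.mono fun x hx hxI =>
      triKernel_recurrence_combination n (hx hxI).ne'),
    integral_eq_sub_of_hasDerivAt
      (fun x _ => hasDerivAt_cos_mul_mul_sqrt_four_sub_cos_sq (2 * n - 3) x)
      ((Continuous.div (by fun_prop) continuous_sqrt_four_sub_cos_sq
        fun x => (sqrt_four_sub_cos_sq_pos x).ne').intervalIntegrable _ _)]
  have hcos : cos ((2 * n - 3) * (π / 2)) = 0 :=
    cos_eq_zero_iff.mpr ⟨n - 2, by push_cast; ring⟩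
  norm_num [hcos]

lemma triRes_recurrence_combination {n : ℤ} (hn : 2 ≤ n) :
    (n - 1) * triRes n - (15 * n - 22) * triRes (n - 1) + (15 * n - 23) * triRes (n - 2)
      - (n - 2) * triRes (n - 3) = -4 * √3 / π := by
  have hlast : ((n : ℝ) - 2) * triRes (n - 3)
      = (n - 2) * (2 / π * ∫ x in (0:ℝ)..π / 2, triKernel (n - 3) x) := by
    rcases hn.eq_or_lt with rfl | hn
    · norm_num
    · rw [triRes_of_nonneg (by omega)]
      push_cast
      rfl
  rw [hlast, triRes_of_nonneg (by omega), triRes_of_nonneg (by omega),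
    triRes_of_nonneg (by omega)]
  push_cast
  linear_combination 2 / π * integral_triKernel_recurrence_combination n

lemma integral_sin_div_sqrt_four_sub_cos_sq :
    ∫ x in (0:ℝ)..π / 2, sin x / √(4 - cos x ^ 2) = π / 6 := by
  have hderiv (x : ℝ) :
      HasDerivAt (fun y => -arcsin (cos y / 2)) (sin x / √(4 - cos x ^ 2)) x := by
    have hc := abs_le.mp (abs_cos_le_one x)
    refine ((hasDerivAt_arcsin (by linarith) (by linarith)).comp x
      ((hasDerivAt_cos x).div_const 2)).neg.congr_deriv ?_
    rw [show 1 - (cos x / 2) ^ 2 = (1 / 2) ^ 2 * (4 - cos x ^ 2) by ring,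
      sqrt_mul (by positivity), sqrt_sq (by positivity)]
    ring
  rw [integral_eq_sub_of_hasDerivAt (fun x _ => hderiv x)
    ((continuous_sin.div continuous_sqrt_four_sub_cos_sq
      fun x => (sqrt_four_sub_cos_sq_pos x).ne').intervalIntegrable _ _)]
  have harcsin : arcsin (1 / 2) = π / 6 := by
    rw [← sin_pi_div_six, arcsin_sin (by linarith [pi_pos]) (by linarith [pi_pos])]
  norm_num [harcsin]

lemma triRes_one : triRes 1 = 1 / 3 := by
  have hkernel : triKernel 1 = fun x => sin x / √(4 - cos x ^ 2) := by
    ext x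
    rcases eq_or_ne (sin x) 0 with hx | hx
    · simp [triKernel, hx]
    · rw [triKernel, one_mul, sq, mul_div_mul_left _ _ hx]
  rw [triRes_of_nonneg zero_le_one, Int.cast_one, hkernel,
    integral_sin_div_sqrt_four_sub_cos_sq]
  field_simp
  norm_num

theorem triRes_recurrence :
    triRes 0 = 0 ∧ triRes 1 = 1 / 3 ∧
    ∀ n : ℤ, 2 ≤ n →
      triRes n = ((15 * (n : ℝ) - 22) / ((n : ℝ) - 1)) * triRes (n - 1)
        - ((15 * (n : ℝ) - 23) / ((n : ℝ) - 1)) * triRes (n - 2)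
        + (((n : ℝ) - 2) / ((n : ℝ) - 1)) * triRes (n - 3)
        - 4 * Real.sqrt 3 / (π * ((n : ℝ) - 1)) := by
  refine ⟨by simp [triRes], triRes_one, fun n hn => ?_⟩
  have hn1 : (n : ℝ) - 1 ≠ 0 := by
    have : (2 : ℝ) ≤ n := by exact_mod_cast hn
    linarith
  have hπ := pi_ne_zero
  have hcomb := triRes_recurrence_combination hn
  field_simp at hcomb ⊢
  linear_combination hcomb
end

section
/- Let c_{i,j} be defined by the square-lattice Green's-function integral. Then c_{0,0} = 0, c_{0,1} = −1, and for every integer i ≥ 1, c_{i,i} = −(4/π)·∑_{k=1}^{i} 1/(2k−1). -/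
open Real MeasureTheory Finset

/-- The square-lattice Green's-function coefficient
`c_{i,j} = -(1/π) ∫_0^∞ (1/τ)(1 - ((τ-i)/(τ+i))^{i-j}((τ-1)/(τ+1))^{i+j}) dτ`,
equal to the entry `C_{O,(i,j)}` of the matrix `C` of the infinite square lattice. -/
noncomputable def squareGreen (i j : ℕ) : ℂ :=
  -(1 / (π : ℂ)) * ∫ τ in Set.Ioi (0:ℝ),
    (1 / (τ : ℂ)) * (1 - (((τ : ℂ) - Complex.I) / ((τ : ℂ) + Complex.I)) ^ ((i : ℤ) - (j : ℤ))
      * (((τ : ℂ) - 1) / ((τ : ℂ) + 1)) ^ ((i : ℤ) + (j : ℤ)))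

/-!
On the diagonal the factor `((τ - 𝕚)/(τ + 𝕚))^{i-j}` drops out. With `u = (τ - 1)/(τ + 1)`,
which runs from `-1` to `1` as `τ` runs over `(0, ∞)`, the integrand `(1 - u^{2n})/τ` equals
`(4/(τ+1)²) ∑_{m<n} u^{2m}`, the `τ`-derivative of `2 ∑_{m<n} u^{2m+1}/(2m+1)`; hence the integral
is `4 ∑_{m<n} 1/(2m+1)`.

For `(i, j) = (0, 1)` the integrand is `2/(1+τ²) + 𝕚 · 2(1-τ)/((1+τ)(1+τ²))`. The real part
integrates to `π`; the imaginary part has the antiderivative `log ((1+τ)²/(1+τ²))`, which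
vanishes both at `0` and at `∞`.
-/

open Filter Topology Set

theorem setIntegral_ofReal_add_ofReal_mul_I {s : Set ℝ} {a b : ℝ → ℝ}
    (ha : IntegrableOn a s) (hb : IntegrableOn b s) :
    ∫ τ in s, ((a τ : ℂ) + (b τ : ℂ) * Complex.I) =
      ((∫ τ in s, a τ : ℝ) : ℂ) + ((∫ τ in s, b τ : ℝ) : ℂ) * Complex.I := by
  rw [integral_add ha.ofReal (hb.ofReal.mul_const _), integral_mul_const, integral_complex_ofReal,
    integral_complex_ofReal]

theorem integrable_two_div_one_add_sq : Integrable fun τ : ℝ => 2 / (1 + τ ^ 2) := by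
  simpa only [div_eq_mul_inv] using integrable_inv_one_add_sq.const_mul 2

theorem integral_Ioi_two_div_one_add_sq : ∫ τ in Ioi (0:ℝ), 2 / (1 + τ ^ 2) = π := by
  simp_rw [div_eq_mul_inv, integral_const_mul, integral_Ioi_inv_one_add_sq, arctan_zero]
  ring

theorem integrableOn_Ioi_two_mul_one_sub_div :
    IntegrableOn (fun τ : ℝ => 2 * (1 - τ) / ((1 + τ) * (1 + τ ^ 2))) (Ioi 0) := by
  refine integrable_two_div_one_add_sq.integrableOn.mono'
    (Measurable.aestronglyMeasurable (by fun_prop)) ?_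
  filter_upwards [ae_restrict_mem measurableSet_Ioi] with τ (hτ : 0 < τ)
  have : |1 - τ| ≤ 1 + τ := abs_le.mpr ⟨by linarith, by linarith⟩
  rw [norm_div, norm_mul, Real.norm_two, Real.norm_eq_abs, Real.norm_of_nonneg (by positivity),
    div_le_div_iff₀ (by positivity) (by positivity)]
  nlinarith [mul_le_mul_of_nonneg_right this (by positivity : (0:ℝ) ≤ 1 + τ ^ 2)]

theorem integral_Ioi_two_mul_one_sub_div :
    ∫ τ in Ioi (0:ℝ), 2 * (1 - τ) / ((1 + τ) * (1 + τ ^ 2)) = 0 := by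
  have hderiv : ∀ x ∈ Ici (0:ℝ), HasDerivAt (fun τ => 2 * log (1 + τ) - log (1 + τ ^ 2))
      (2 * (1 - x) / ((1 + x) * (1 + x ^ 2))) x := by
    intro x (hx : 0 ≤ x)
    have h1 : 1 + x ≠ 0 := by positivity
    have h2 : 1 + x ^ 2 ≠ 0 := by positivity
    refine (((((hasDerivAt_id' x).const_add 1).log h1).const_mul 2).fun_sub
      (((hasDerivAt_pow 2 x).const_add 1).log h2)).congr_deriv ?_
    field_simp
    ring
  have hlim : Tendsto (fun τ : ℝ => 2 * log (1 + τ) - log (1 + τ ^ 2)) atTop (𝓝 0) := by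
    have hratio : Tendsto (fun τ : ℝ => (τ⁻¹ + 1) ^ 2 / (τ⁻¹ ^ 2 + 1)) atTop (𝓝 1) := by
      have : ContinuousAt (fun x : ℝ => (x + 1) ^ 2 / (x ^ 2 + 1)) 0 :=
        ContinuousAt.div (by fun_prop) (by fun_prop) (by norm_num)
      simpa [Function.comp_def] using this.tendsto.comp tendsto_inv_atTop_zero
    have := (continuousAt_log one_ne_zero).tendsto.comp hratio
    rw [log_one] at this
    refine this.congr' ?_
    filter_upwards [eventually_gt_atTop 0] with τ hτ
    rw [Function.comp_apply, show (τ⁻¹ + 1) ^ 2 / (τ⁻¹ ^ 2 + 1) = (1 + τ) ^ 2 / (1 + τ ^ 2) by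
      field_simp, log_div (by positivity) (by positivity), log_pow]
    push_cast
    ring
  rw [integral_Ioi_of_hasDerivAt_of_tendsto' hderiv integrableOn_Ioi_two_mul_one_sub_div hlim]
  simp

noncomputable def cayley (τ : ℝ) : ℝ := (τ - 1) / (τ + 1)

theorem cayley_zero : cayley 0 = -1 := by norm_num [cayley]

theorem abs_cayley_le_one {τ : ℝ} (hτ : 0 ≤ τ) : |cayley τ| ≤ 1 := by
  rw [cayley, abs_div, abs_of_pos (by linarith : 0 < τ + 1), div_le_one (by linarith)]
  exact abs_le.mpr ⟨by linarith, by linarith⟩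

theorem one_sub_cayley_sq {τ : ℝ} (hτ : τ + 1 ≠ 0) : 1 - cayley τ ^ 2 = 4 * τ / (τ + 1) ^ 2 := by
  rw [cayley]
  field_simp
  ring

theorem hasDerivAt_cayley {τ : ℝ} (hτ : τ + 1 ≠ 0) : HasDerivAt cayley (2 / (τ + 1) ^ 2) τ := by
  refine (((hasDerivAt_id' τ).sub_const 1).fun_div ((hasDerivAt_id' τ).add_const 1) hτ).congr_deriv
    ?_
  field_simp
  ring

theorem tendsto_cayley_atTop : Tendsto cayley atTop (𝓝 1) := by
  have h : Tendsto (fun τ : ℝ => 1 - 2 / (τ + 1)) atTop (𝓝 (1 - 0)) :=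
    tendsto_const_nhds.sub
      (tendsto_const_nhds.div_atTop (tendsto_atTop_add_const_right _ 1 tendsto_id))
  rw [sub_zero] at h
  refine h.congr' ?_
  filter_upwards [eventually_gt_atTop 0] with τ hτ
  rw [cayley]
  field_simp
  ring

noncomputable def oddPowerSum (n : ℕ) (y : ℝ) : ℝ := ∑ m ∈ range n, y ^ (2 * m + 1) / (2 * m + 1)

theorem hasDerivAt_oddPowerSum (n : ℕ) (y : ℝ) :
    HasDerivAt (oddPowerSum n) (∑ m ∈ range n, (y ^ 2) ^ m) y := by
  refine (HasDerivAt.fun_sum fun m _ => (hasDerivAt_pow (2 * m + 1) y).div_const _).congr_deriv ?_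
  refine sum_congr rfl fun m _ => ?_
  rw [← pow_mul]
  push_cast
  field_simp

theorem oddPowerSum_neg (n : ℕ) (y : ℝ) : oddPowerSum n (-y) = -oddPowerSum n y := by
  simp only [oddPowerSum, ← sum_neg_distrib, (odd_two_mul_add_one _).neg_pow, neg_div]

theorem oddPowerSum_one (n : ℕ) : oddPowerSum n 1 = ∑ m ∈ range n, 1 / (2 * (m : ℝ) + 1) := by
  simp [oddPowerSum]

theorem one_div_mul_one_sub_cayley_pow {τ : ℝ} (hτ : 0 < τ) (n : ℕ) :
    1 / τ * (1 - cayley τ ^ (2 * n)) =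
      2 * ((∑ m ∈ range n, (cayley τ ^ 2) ^ m) * (2 / (τ + 1) ^ 2)) := by
  rw [pow_mul, ← mul_neg_geom_sum, one_sub_cayley_sq (by linarith)]
  field_simp
  ring

theorem integral_Ioi_one_div_mul_one_sub_cayley_pow (n : ℕ) :
    ∫ τ in Ioi (0:ℝ), 1 / τ * (1 - cayley τ ^ (2 * n)) =
      4 * ∑ m ∈ range n, 1 / (2 * (m : ℝ) + 1) := by
  have hderiv : ∀ τ : ℝ, τ + 1 ≠ 0 → HasDerivAt (fun τ => 2 * oddPowerSum n (cayley τ))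
      (2 * ((∑ m ∈ range n, (cayley τ ^ 2) ^ m) * (2 / (τ + 1) ^ 2))) τ := fun τ hτ =>
    ((hasDerivAt_oddPowerSum n (cayley τ)).comp τ (hasDerivAt_cayley hτ)).const_mul 2
  have hnonneg : ∀ τ ∈ Ioi (0:ℝ), 0 ≤ 1 / τ * (1 - cayley τ ^ (2 * n)) := fun τ (hτ : 0 < τ) => by
    have : cayley τ ^ (2 * n) ≤ 1 := by
      rw [← (even_two_mul n).pow_abs]
      exact pow_le_one₀ (abs_nonneg _) (abs_cayley_le_one hτ.le)
    exact mul_nonneg (by positivity) (by linarith)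
  have hlim : Tendsto (fun τ => 2 * oddPowerSum n (cayley τ)) atTop (𝓝 (2 * oddPowerSum n 1)) :=
    ((hasDerivAt_oddPowerSum n 1).continuousAt.tendsto.comp tendsto_cayley_atTop).const_mul 2
  -- At `τ = 0` the integrand has the junk value `1 / 0 * 0 = 0`, not the derivative `4 n`,
  -- so the FTC is applied on `Ioi 0` with continuity at `0`.
  rw [integral_Ioi_of_hasDerivAt_of_nonneg (hderiv 0 (by norm_num)).continuousAt.continuousWithinAt
    (fun τ (hτ : 0 < τ) => (hderiv τ (by linarith)).congr_deriv
      (one_div_mul_one_sub_cayley_pow hτ n).symm) hnonneg hlim,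
    cayley_zero, oddPowerSum_neg, oddPowerSum_one]
  ring

theorem sum_Icc_one_div_two_mul_sub_one (n : ℕ) :
    ∑ k ∈ Icc 1 n, 1 / (2 * (k : ℝ) - 1) = ∑ m ∈ range n, 1 / (2 * (m : ℝ) + 1) := by
  induction n with
  | zero => simp
  | succ n ih =>
    rw [sum_Icc_succ_top (by omega), sum_range_succ, ih]
    push_cast
    ring_nf

theorem squareGreen_self (n : ℕ) :
    squareGreen n n = ((-(4 / π) * ∑ m ∈ range n, 1 / (2 * (m : ℝ) + 1) : ℝ) : ℂ) := by
  have hint : ∫ τ in Ioi (0:ℝ), 1 / (τ : ℂ) * (1 - (((τ : ℂ) - 1) / ((τ : ℂ) + 1)) ^ (2 * n)) =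
      ((∫ τ in Ioi (0:ℝ), 1 / τ * (1 - cayley τ ^ (2 * n)) : ℝ) : ℂ) := by
    rw [← integral_complex_ofReal]
    push_cast [cayley]
    rfl
  simp only [squareGreen, sub_self, zpow_zero, one_mul, ← two_mul, ← Nat.cast_two (R := ℤ),
    ← Nat.cast_mul, zpow_natCast, hint, integral_Ioi_one_div_mul_one_sub_cayley_pow]
  push_cast
  ring

theorem one_div_mul_one_sub_div_inv_mul_div {τ : ℝ} (hτ : 0 < τ) :
    1 / (τ : ℂ) * (1 - ((τ - Complex.I) / (τ + Complex.I))⁻¹ * ((τ - 1) / (τ + 1))) =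
      ((2 / (1 + τ ^ 2) : ℝ) : ℂ) +
        ((2 * (1 - τ) / ((1 + τ) * (1 + τ ^ 2)) : ℝ) : ℂ) * Complex.I := by
  have h0 : (τ : ℂ) ≠ 0 := Complex.ofReal_ne_zero.mpr hτ.ne'
  have h1 : 1 + (τ : ℂ) ≠ 0 := by exact_mod_cast (by linarith : 1 + τ ≠ 0)
  have h2 : (1 : ℂ) + τ ^ 2 ≠ 0 := by exact_mod_cast (by positivity : 1 + τ ^ 2 ≠ 0)
  have hI : (τ : ℂ) - Complex.I ≠ 0 := fun h => by simpa using congrArg Complex.im h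
  rw [inv_div, add_comm (τ : ℂ) 1]
  push_cast
  field_simp
  ring_nf
  rw [Complex.I_sq]
  ring

theorem squareGreen_zero_one : squareGreen 0 1 = -1 := by
  have hint : ∫ τ in Ioi (0:ℝ),
      1 / (τ : ℂ) * (1 - ((τ - Complex.I) / (τ + Complex.I))⁻¹ * ((τ - 1) / (τ + 1))) = π := by
    rw [setIntegral_congr_fun measurableSet_Ioi fun τ hτ => one_div_mul_one_sub_div_inv_mul_div hτ,
      setIntegral_ofReal_add_ofReal_mul_I integrable_two_div_one_add_sq.integrableOn
        integrableOn_Ioi_two_mul_one_sub_div, integral_Ioi_two_div_one_add_sq,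
      integral_Ioi_two_mul_one_sub_div]
    simp
  simp only [squareGreen, Nat.cast_zero, Nat.cast_one, zero_sub, zero_add, zpow_neg_one, zpow_one,
    hint]
  field_simp [Complex.ofReal_ne_zero.mpr pi_ne_zero]

theorem squareGreen_diagonal :
    squareGreen 0 0 = 0 ∧ squareGreen 0 1 = -1 ∧
    ∀ i : ℕ, 1 ≤ i →
      squareGreen i i =
        ((-(4 / π) * ∑ k ∈ Finset.Icc 1 i, 1 / (2 * (k : ℝ) - 1) : ℝ) : ℂ) := by
  refine ⟨by simpa using squareGreen_self 0, squareGreen_zero_one, fun i _ => ?_⟩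
  rw [squareGreen_self, sum_Icc_one_div_two_mul_sub_one]
end

section
/- Let c_{i,j} be defined by the square-lattice Green's-function integral. Then for every integer j ≥ 2, c_{0,j} = 4·c_{0,j−1} − c_{0,j−2} − 2·c_{1,j−1}. -/
/-!
Put `W τ = (τ + i)(τ - 1) / ((τ - i)(τ + 1))` and `y τ = (τ - 1)/(τ + 1)`. The integrand of
`c_{0,n}` is `(1 - Wⁿ)/τ` and that of `c_{1,k+1}` is `(1 - Wᵏ y²)/τ`, so in the combination
`c_{0,k+2} - 4 c_{0,k+1} + c_{0,k} + 2 c_{1,k+1}` the constants cancel and the integrand is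
`-Wᵏ (W² - 4W + 1 + 2y²)/τ`. The rational identity `W² - 4W + 1 + 2y² = -2iτ W'` turns this into the
exact derivative of `2i W^{k+1}/(k+1)`, whose integral over `(0, ∞)` vanishes because
`W 0 = 1 = W ∞`. Each term is integrable since `‖W‖, ‖y‖ ≤ 1` and
`‖1 - W‖, ‖1 - y²‖ ≤ 4τ/(1 + τ²)` on `τ ≥ 0`.
-/

open Real MeasureTheory

open Complex Set Filter Topology

theorem norm_one_sub_mul_le {R : Type*} [SeminormedRing R] {a b : R} (hb : ‖b‖ ≤ 1) :
    ‖1 - a * b‖ ≤ ‖1 - a‖ + ‖1 - b‖ :=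
  calc ‖1 - a * b‖ = ‖(1 - b) + (1 - a) * b‖ := by congr 1; noncomm_ring
    _ ≤ ‖1 - b‖ + ‖1 - a‖ * ‖b‖ := (norm_add_le _ _).trans (by gcongr; exact norm_mul_le _ _)
    _ ≤ ‖1 - a‖ + ‖1 - b‖ := by nlinarith [norm_nonneg (1 - a)]

theorem norm_one_sub_pow_le {R : Type*} [SeminormedRing R] {a : R} (ha : ‖a‖ ≤ 1) (n : ℕ) :
    ‖1 - a ^ n‖ ≤ n * ‖1 - a‖ := by
  induction n with
  | zero => simp
  | succ n ih =>
    rw [pow_succ]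
    push_cast
    linarith [norm_one_sub_mul_le (a := a ^ n) ha]

theorem integrableOn_Ioi_one_div_mul_one_sub {w : ℝ → ℂ} {C : ℝ} (hw : ContinuousOn w (Ioi 0))
    (hbound : ∀ τ > 0, ‖1 - w τ‖ ≤ C * τ / (1 + τ ^ 2)) :
    IntegrableOn (fun τ : ℝ => 1 / (τ : ℂ) * (1 - w τ)) (Ioi 0) := by
  have hcont : ContinuousOn (fun τ : ℝ => 1 / (τ : ℂ) * (1 - w τ)) (Ioi 0) :=
    ((continuousOn_const.div continuous_ofReal.continuousOn fun τ hτ =>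
      ofReal_ne_zero.2 (ne_of_gt hτ)).mul (continuousOn_const.sub hw))
  refine Integrable.mono' (integrable_inv_one_add_sq.const_mul C).integrableOn
    (hcont.aestronglyMeasurable measurableSet_Ioi) ((ae_restrict_iff' measurableSet_Ioi).2
      (Eventually.of_forall fun τ (hτ : 0 < τ) => ?_))
  rw [norm_mul, norm_div, norm_one, norm_real, Real.norm_of_nonneg hτ.le]
  calc 1 / τ * ‖1 - w τ‖ ≤ 1 / τ * (C * τ / (1 + τ ^ 2)) := by gcongr; exact hbound τ hτ
    _ = C * (1 + τ ^ 2)⁻¹ := by field_simp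

noncomputable def axisRatio (z : ℂ) : ℂ := (z + I) * (z - 1) / ((z - I) * (z + 1))

noncomputable def axisRatioDeriv (z : ℂ) : ℂ := 2 * (1 - I) * (z ^ 2 + I) / ((z - I) * (z + 1)) ^ 2

noncomputable def shiftRatio (z : ℂ) : ℂ := (z - 1) / (z + 1)

theorem hasDerivAt_axisRatio {z : ℂ} (hI : z - I ≠ 0) (h1 : z + 1 ≠ 0) :
    HasDerivAt axisRatio (axisRatioDeriv z) z := by
  have hnum : HasDerivAt (fun z : ℂ => (z + I) * (z - 1)) (2 * z + I - 1) z :=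
    (((hasDerivAt_id z).add_const I).mul ((hasDerivAt_id z).sub_const 1)).congr_deriv
      (by simp only [id]; ring)
  have hden : HasDerivAt (fun z : ℂ => (z - I) * (z + 1)) (2 * z - I + 1) z :=
    (((hasDerivAt_id z).sub_const I).mul ((hasDerivAt_id z).add_const 1)).congr_deriv
      (by simp only [id]; ring)
  refine (hnum.div hden (mul_ne_zero hI h1)).congr_deriv ?_
  rw [axisRatioDeriv]
  congr 1
  ring

theorem two_I_mul_axisRatioDeriv {z : ℂ} (h0 : z ≠ 0) (hI : z - I ≠ 0) (h1 : z + 1 ≠ 0) :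
    2 * I * axisRatioDeriv z
      = -(axisRatio z ^ 2 - 4 * axisRatio z + 1 + 2 * shiftRatio z ^ 2) / z := by
  rw [axisRatioDeriv, axisRatio, shiftRatio]
  field_simp
  linear_combination (8 * z ^ 2 - 4 * z ^ 3 - 4 * I * z) * I_sq

theorem axisRatio_zero : axisRatio 0 = 1 := by
  rw [axisRatio, div_eq_one_iff_eq (by simp)]
  ring

theorem one_sub_axisRatio {z : ℂ} (hI : z - I ≠ 0) (h1 : z + 1 ≠ 0) :
    1 - axisRatio z = 2 * (1 - I) * z / ((z - I) * (z + 1)) := by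
  rw [axisRatio]
  field_simp
  ring

theorem ofReal_sub_I_ne_zero (τ : ℝ) : (τ : ℂ) - I ≠ 0 := fun h => by
  simpa using congrArg im h

theorem ofReal_add_one_ne_zero {τ : ℝ} (hτ : 0 ≤ τ) : (τ : ℂ) + 1 ≠ 0 := by
  exact_mod_cast (by linarith : τ + 1 ≠ 0)

theorem norm_ofReal_add_one {τ : ℝ} (hτ : 0 ≤ τ) : ‖(τ : ℂ) + 1‖ = τ + 1 := by
  rw [← ofReal_one, ← ofReal_add, norm_real, Real.norm_of_nonneg (by linarith)]

theorem hasDerivAt_axisRatio_ofReal {τ : ℝ} (hτ : 0 ≤ τ) :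
    HasDerivAt (fun τ : ℝ => axisRatio τ) (axisRatioDeriv τ) τ :=
  (hasDerivAt_axisRatio (ofReal_sub_I_ne_zero τ) (ofReal_add_one_ne_zero hτ)).comp_ofReal

theorem one_sub_shiftRatio_sq {τ : ℝ} (hτ : 0 ≤ τ) :
    1 - shiftRatio τ ^ 2 = ((4 * τ / (τ + 1) ^ 2 : ℝ) : ℂ) := by
  have : (τ : ℂ) + 1 ≠ 0 := ofReal_add_one_ne_zero hτ
  rw [shiftRatio]
  push_cast
  field_simp
  ring

theorem norm_shiftRatio_le_one {τ : ℝ} (hτ : 0 ≤ τ) : ‖shiftRatio τ‖ ≤ 1 := by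
  rw [shiftRatio, norm_div, norm_ofReal_add_one hτ, div_le_one (by linarith), ← ofReal_one,
    ← ofReal_sub, norm_real, Real.norm_eq_abs, abs_le]
  constructor <;> linarith

theorem norm_axisRatio_le_one {τ : ℝ} (hτ : 0 ≤ τ) : ‖axisRatio τ‖ ≤ 1 := by
  have hconj : (τ : ℂ) + I = starRingEnd ℂ ((τ : ℂ) - I) := by simp
  have hrot : ‖((τ : ℂ) + I) / ((τ : ℂ) - I)‖ = 1 := by
    rw [norm_div, hconj, norm_conj, div_self (norm_ne_zero_iff.2 (ofReal_sub_I_ne_zero τ))]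
  calc ‖axisRatio τ‖ = ‖((τ : ℂ) + I) / ((τ : ℂ) - I)‖ * ‖shiftRatio τ‖ := by
        rw [← norm_mul, axisRatio, shiftRatio, div_mul_div_comm]
    _ ≤ 1 := by rw [hrot, one_mul]; exact norm_shiftRatio_le_one hτ

theorem norm_one_sub_axisRatio_le {τ : ℝ} (hτ : 0 ≤ τ) :
    ‖1 - axisRatio τ‖ ≤ 4 * τ / (1 + τ ^ 2) := by
  rw [one_sub_axisRatio (ofReal_sub_I_ne_zero τ) (ofReal_add_one_ne_zero hτ), norm_div,
    norm_mul, norm_mul, norm_real, Real.norm_of_nonneg hτ, norm_mul, norm_ofReal_add_one hτ]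
  have hnum : ‖(2 : ℂ)‖ * ‖1 - I‖ ≤ 4 := by
    have := norm_sub_le (1 : ℂ) I
    rw [norm_one, norm_I] at this
    rw [Complex.norm_ofNat]
    linarith
  have hsq : ‖(τ : ℂ) - I‖ ^ 2 = 1 + τ ^ 2 := by
    rw [Complex.sq_norm, normSq_apply]; simp; ring
  have hle : ‖(τ : ℂ) - I‖ ≤ τ + 1 := by
    simpa [norm_I, norm_real, Real.norm_of_nonneg hτ] using norm_sub_le (τ : ℂ) I
  have hden : 1 + τ ^ 2 ≤ ‖(τ : ℂ) - I‖ * (τ + 1) := by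
    nlinarith [norm_nonneg ((τ : ℂ) - I)]
  exact div_le_div₀ (by positivity) (by nlinarith) (by positivity) hden

theorem norm_one_sub_axisRatio_pow_le {τ : ℝ} (hτ : 0 ≤ τ) (n : ℕ) :
    ‖1 - axisRatio τ ^ n‖ ≤ n * (4 * τ / (1 + τ ^ 2)) :=
  (norm_one_sub_pow_le (norm_axisRatio_le_one hτ) n).trans
    (by gcongr; exact norm_one_sub_axisRatio_le hτ)

theorem norm_one_sub_axisRatio_pow_mul_shiftRatio_sq_le {τ : ℝ} (hτ : 0 ≤ τ) (k : ℕ) :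
    ‖1 - axisRatio τ ^ k * shiftRatio τ ^ 2‖ ≤ (k + 1) * (4 * τ / (1 + τ ^ 2)) := by
  have hy : ‖shiftRatio τ ^ 2‖ ≤ 1 := by
    rw [norm_pow]; exact pow_le_one₀ (norm_nonneg _) (norm_shiftRatio_le_one hτ)
  have hy' : ‖1 - shiftRatio τ ^ 2‖ ≤ 4 * τ / (1 + τ ^ 2) := by
    rw [one_sub_shiftRatio_sq hτ, norm_real, Real.norm_of_nonneg (by positivity)]
    exact div_le_div_of_nonneg_left (by positivity) (by positivity) (by nlinarith)
  linarith [norm_one_sub_mul_le (a := axisRatio τ ^ k) hy, norm_one_sub_axisRatio_pow_le hτ k]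

theorem continuousOn_axisRatio_ofReal : ContinuousOn (fun τ : ℝ => axisRatio τ) (Ioi 0) :=
  fun _ hτ => (hasDerivAt_axisRatio_ofReal (le_of_lt hτ)).continuousAt.continuousWithinAt

theorem continuousOn_shiftRatio_ofReal : ContinuousOn (fun τ : ℝ => shiftRatio τ) (Ioi 0) :=
  (continuous_ofReal.sub continuous_const).continuousOn.div
    (continuous_ofReal.add continuous_const).continuousOn
    fun _ hτ => ofReal_add_one_ne_zero (le_of_lt hτ)

theorem tendsto_axisRatio_atTop : Tendsto (fun τ : ℝ => axisRatio τ) atTop (𝓝 1) := by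
  rw [tendsto_iff_norm_sub_tendsto_zero]
  refine squeeze_zero' (Eventually.of_forall fun _ => norm_nonneg _) ?_
    (by simpa using tendsto_inv_atTop_zero.const_mul (4 : ℝ))
  filter_upwards [eventually_gt_atTop 0] with τ hτ
  rw [norm_sub_rev]
  calc ‖1 - axisRatio τ‖ ≤ 4 * τ / (1 + τ ^ 2) := norm_one_sub_axisRatio_le hτ.le
    _ ≤ 4 * τ⁻¹ := by
      rw [← div_eq_mul_inv, div_le_div_iff₀ (by positivity) hτ]; nlinarith

noncomputable def axisIntegrand (n : ℕ) (τ : ℝ) : ℂ := 1 / τ * (1 - axisRatio τ ^ n)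

noncomputable def offAxisIntegrand (k : ℕ) (τ : ℝ) : ℂ :=
  1 / τ * (1 - axisRatio τ ^ k * shiftRatio τ ^ 2)

theorem integrableOn_axisIntegrand (n : ℕ) : IntegrableOn (axisIntegrand n) (Ioi 0) :=
  integrableOn_Ioi_one_div_mul_one_sub (C := 4 * n) (continuousOn_axisRatio_ofReal.pow n)
    fun τ hτ => (norm_one_sub_axisRatio_pow_le hτ.le n).trans_eq (by ring)

theorem integrableOn_offAxisIntegrand (k : ℕ) : IntegrableOn (offAxisIntegrand k) (Ioi 0) :=
  integrableOn_Ioi_one_div_mul_one_sub (C := 4 * (k + 1))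
    ((continuousOn_axisRatio_ofReal.pow k).mul (continuousOn_shiftRatio_ofReal.pow 2))
    fun τ hτ => (norm_one_sub_axisRatio_pow_mul_shiftRatio_sq_le hτ.le k).trans_eq (by ring)

theorem axis_combination_eq {τ : ℝ} (hτ : 0 < τ) (k : ℕ) :
    axisIntegrand (k + 2) τ - 4 * axisIntegrand (k + 1) τ + axisIntegrand k τ
      + 2 * offAxisIntegrand k τ = axisRatio τ ^ k * (2 * I * axisRatioDeriv τ) := by
  rw [two_I_mul_axisRatioDeriv (ofReal_ne_zero.2 hτ.ne') (ofReal_sub_I_ne_zero τ)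
    (ofReal_add_one_ne_zero hτ.le), axisIntegrand, axisIntegrand, axisIntegrand, offAxisIntegrand]
  ring

theorem integral_axis_combination_eq_zero (k : ℕ) :
    ∫ τ in Ioi 0, (axisIntegrand (k + 2) τ - 4 * axisIntegrand (k + 1) τ + axisIntegrand k τ
      + 2 * offAxisIntegrand k τ) = 0 := by
  set F : ℝ → ℂ := fun τ => 2 * I / (k + 1) * axisRatio τ ^ (k + 1)
  have hF : ∀ τ : ℝ, 0 ≤ τ → HasDerivAt F (axisRatio τ ^ k * (2 * I * axisRatioDeriv τ)) τ := by
    intro τ hτ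
    refine (((hasDerivAt_axisRatio_ofReal hτ).pow (k + 1)).const_mul _).congr_deriv ?_
    field_simp
    push_cast
    ring
  have hint : IntegrableOn (fun τ => axisIntegrand (k + 2) τ - 4 * axisIntegrand (k + 1) τ
      + axisIntegrand k τ + 2 * offAxisIntegrand k τ) (Ioi 0) :=
    ((((integrableOn_axisIntegrand _).sub ((integrableOn_axisIntegrand _).const_mul 4)).add
      (integrableOn_axisIntegrand _)).add ((integrableOn_offAxisIntegrand k).const_mul 2))
  have hlim : Tendsto F atTop (𝓝 (2 * I / (k + 1) * 1 ^ (k + 1))) :=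
    (tendsto_axisRatio_atTop.pow (k + 1)).const_mul _
  rw [integral_Ioi_of_hasDerivAt_of_tendsto (hF 0 le_rfl).continuousAt.continuousWithinAt
    (fun τ hτ => (hF τ (le_of_lt hτ)).congr_deriv (axis_combination_eq hτ k).symm) hint hlim]
  simp [F, axisRatio_zero]

theorem integral_axisIntegrand_add_two (k : ℕ) :
    ∫ τ in Ioi 0, axisIntegrand (k + 2) τ = 4 * (∫ τ in Ioi 0, axisIntegrand (k + 1) τ)
      - (∫ τ in Ioi 0, axisIntegrand k τ) - 2 * ∫ τ in Ioi 0, offAxisIntegrand k τ := by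
  have i0 := integrableOn_axisIntegrand (k + 2)
  have i1 := (integrableOn_axisIntegrand (k + 1)).const_mul 4
  have i2 := integrableOn_axisIntegrand k
  have i3 := (integrableOn_offAxisIntegrand k).const_mul 2
  have hzero := integral_axis_combination_eq_zero k
  rw [integral_add _ i3, integral_add _ i2, integral_sub i0 i1, integral_const_mul,
    integral_const_mul] at hzero
  · linear_combination hzero
  · exact i0.sub i1
  · exact (i0.sub i1).add i2

theorem squareGreen_zero_eq (n : ℕ) :
    squareGreen 0 n = -(1 / (π : ℂ)) * ∫ τ in Ioi 0, axisIntegrand n τ := by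
  rw [squareGreen]
  congr 1
  refine integral_congr_ae (Eventually.of_forall fun τ => ?_)
  simp only [axisIntegrand, axisRatio, Nat.cast_zero, zero_sub, zero_add, zpow_neg,
    zpow_natCast, ← inv_pow, inv_div, ← mul_pow, div_mul_div_comm]

theorem squareGreen_one_succ_eq (k : ℕ) :
    squareGreen 1 (k + 1) = -(1 / (π : ℂ)) * ∫ τ in Ioi 0, offAxisIntegrand k τ := by
  rw [squareGreen]
  congr 1
  refine integral_congr_ae (Eventually.of_forall fun τ => ?_)
  have hsub : ((1 : ℕ) : ℤ) - ((k + 1 : ℕ) : ℤ) = -(k : ℤ) := by push_cast; ring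
  have hadd : ((1 : ℕ) : ℤ) + ((k + 1 : ℕ) : ℤ) = ((k + 2 : ℕ) : ℤ) := by push_cast; ring
  dsimp only
  rw [hsub, hadd, zpow_neg, zpow_natCast, zpow_natCast, ← inv_pow, inv_div, offAxisIntegrand,
    axisRatio, shiftRatio, ← div_mul_div_comm, mul_pow, pow_add, mul_assoc]

theorem squareGreen_axis_recurrence :
    ∀ j : ℕ, 2 ≤ j →
      squareGreen 0 j =
        4 * squareGreen 0 (j - 1) - squareGreen 0 (j - 2) - 2 * squareGreen 1 (j - 1) := by
  intro j hj
  obtain ⟨k, rfl⟩ : ∃ k, j = k + 2 := ⟨j - 2, by omega⟩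
  simp only [show k + 2 - 1 = k + 1 by omega, Nat.add_sub_cancel, squareGreen_zero_eq,
    squareGreen_one_succ_eq, integral_axisIntegrand_add_two]
  ring
end

section
/- Suppose d, d′ : ℕ × ℕ → ℝ both satisfy: (symmetry) d(i,j) = d(j,i) for all i, j; (diagonal values) d(i,i) = −(4/π)·∑_{k=1}^{i} 1/(2k−1) for all i ≥ 0 (so d(0,0) = 0); (first column value) d(0,1) = −1; (recurrence on the axis) d(0,j) = 4·d(0,j−1) − d(0,j−2) − 2·d(1,j−1) for all j ≥ 2; and (interior recurrence) d(i,j) = 4·d(i,j−1) − d(i,j−2) − d(i−1,j−1) − d(i+1,j−1) for all j > i ≥ 1; and the same relations hold for d′. Then d(i,j) = d′(i,j) for all i, j ≥ 0. In other words, these relations uniquely determine all the coefficients c_{i,j} of the square-lattice matrix C without computing any integral. -/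
open Real Finset

/-- The symmetry and the two recurrences of the square-lattice coefficients `c i j`, without
the initial values. -/
structure SquareGreenRecurrence (d : ℕ → ℕ → ℝ) : Prop where
  symm : ∀ i j, d i j = d j i
  axis : ∀ j : ℕ, 2 ≤ j → d 0 j = 4 * d 0 (j - 1) - d 0 (j - 2) - 2 * d 1 (j - 1)
  interior : ∀ i j : ℕ, 1 ≤ i → i < j →
    d i j = 4 * d i (j - 1) - d i (j - 2) - d (i - 1) (j - 1) - d (i + 1) (j - 1)

namespace SquareGreenRecurrence

variable {d d' : ℕ → ℕ → ℝ}

theorem axis_succ_succ (hd : SquareGreenRecurrence d) (j : ℕ) :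
    d 0 (j + 2) = 4 * d 0 (j + 1) - d 0 j - 2 * d 1 (j + 1) :=
  hd.axis (j + 2) (by omega)

theorem interior_succ_succ (hd : SquareGreenRecurrence d) {i j : ℕ} (hij : i ≤ j) :
    d (i + 1) (j + 2) = 4 * d (i + 1) (j + 1) - d (i + 1) j - d i (j + 1) - d (i + 2) (j + 1) :=
  hd.interior (i + 1) (j + 2) (by omega) (by omega)

/-- On the superdiagonal the interior recurrence involves the unknown `d (n+1) (n+2)` twice,
once through symmetry, and can be solved for it. -/
theorem superdiag_succ (hd : SquareGreenRecurrence d) (n : ℕ) :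
    d (n + 1) (n + 2) = 2 * d (n + 1) (n + 1) - d n (n + 1) := by
  have h := hd.interior_succ_succ (le_refl n)
  rw [hd.symm (n + 1) n, hd.symm (n + 2) (n + 1)] at h
  linarith

/-- Induction on the column `j`: every entry `d i j` with `i < j` is given by one of the
recurrences in terms of entries of earlier columns, and the superdiagonal by `superdiag_succ`. -/
theorem eq_of_le_of_diag (hd : SquareGreenRecurrence d) (hd' : SquareGreenRecurrence d')
    (hdiag : ∀ i, d i i = d' i i) (h01 : d 0 1 = d' 0 1) :
    ∀ j i, i ≤ j → d i j = d' i j := by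
  intro j
  induction j using Nat.strong_induction_on with
  | _ j ih =>
    intro i hij
    rcases hij.eq_or_lt with rfl | hlt
    · exact hdiag i
    match j, i, hlt with
    | 1, 0, _ => exact h01
    | n + 2, 0, _ =>
      rw [hd.axis_succ_succ, hd'.axis_succ_succ, ih (n + 1) (by omega) 0 (by omega),
        ih n (by omega) 0 (by omega), ih (n + 1) (by omega) 1 (by omega)]
    | n + 2, i + 1, hlt =>
      rcases (Nat.lt_succ_iff.mp hlt).eq_or_lt with heq | hlt'
      · obtain rfl : i = n := by omega
        rw [hd.superdiag_succ, hd'.superdiag_succ, hdiag, ih (i + 1) (by omega) i (by omega)]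
      · rw [hd.interior_succ_succ (by omega), hd'.interior_succ_succ (by omega),
          ih (n + 1) (by omega) (i + 1) (by omega), ih n (by omega) (i + 1) (by omega),
          ih (n + 1) (by omega) i (by omega), ih (n + 1) (by omega) (i + 2) (by omega)]

theorem eq_of_diag (hd : SquareGreenRecurrence d) (hd' : SquareGreenRecurrence d')
    (hdiag : ∀ i, d i i = d' i i) (h01 : d 0 1 = d' 0 1) : d = d' := by
  ext i j
  rcases le_total i j with h | h
  · exact hd.eq_of_le_of_diag hd' hdiag h01 j i h
  · rw [hd.symm, hd'.symm]
    exact hd.eq_of_le_of_diag hd' hdiag h01 i j h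

end SquareGreenRecurrence

/-- The recurrence relations of Proposition 2 uniquely determine the
square-lattice Green's-function coefficients. -/
theorem squareGreen_coefficients_unique (d d' : ℕ → ℕ → ℝ)
    (hsymm : ∀ i j, d i j = d j i)
    (hdiag : ∀ i : ℕ, d i i = -(4 / π) * ∑ k ∈ Finset.Icc 1 i, 1 / (2 * (k : ℝ) - 1))
    (h01 : d 0 1 = -1)
    (haxis : ∀ j : ℕ, 2 ≤ j → d 0 j = 4 * d 0 (j - 1) - d 0 (j - 2) - 2 * d 1 (j - 1))
    (hint : ∀ i j : ℕ, 1 ≤ i → i < j →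
      d i j = 4 * d i (j - 1) - d i (j - 2) - d (i - 1) (j - 1) - d (i + 1) (j - 1))
    (hsymm' : ∀ i j, d' i j = d' j i)
    (hdiag' : ∀ i : ℕ, d' i i = -(4 / π) * ∑ k ∈ Finset.Icc 1 i, 1 / (2 * (k : ℝ) - 1))
    (h01' : d' 0 1 = -1)
    (haxis' : ∀ j : ℕ, 2 ≤ j → d' 0 j = 4 * d' 0 (j - 1) - d' 0 (j - 2) - 2 * d' 1 (j - 1))
    (hint' : ∀ i j : ℕ, 1 ≤ i → i < j →
      d' i j = 4 * d' i (j - 1) - d' i (j - 2) - d' (i - 1) (j - 1) - d' (i + 1) (j - 1)) :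
    ∀ i j : ℕ, d i j = d' i j := by
  have hd : SquareGreenRecurrence d := ⟨hsymm, haxis, hint⟩
  have hd' : SquareGreenRecurrence d' := ⟨hsymm', haxis', hint'⟩
  have heq := hd.eq_of_diag hd' (fun i => (hdiag i).trans (hdiag' i).symm) (h01.trans h01'.symm)
  exact fun i j => congrFun (congrFun heq i) j
end

section
/- Let w be a self-avoiding polygon of length ℓ ≥ 4 on the square lattice ℤ², and let N(w) denote its distance-one neighborhood. Then any two points u, v ∈ N(w) satisfy ‖u − v‖₁ ≤ ℓ/2 + 2, i.e. two vertices belonging to the distance-one neighborhood of a polygon of length ℓ stand at graph distance at most ℓ/2 + 2 from each other. -/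
open Finset

/-- `w` is a self-avoiding polygon of length `ℓ` on the square lattice `ℤ²`:
a closed walk with unit steps whose first `ℓ` vertices are pairwise distinct. -/
def IsSAP (ℓ : ℕ) (w : ℕ → ℤ × ℤ) : Prop :=
  w ℓ = w 0 ∧
  (∀ k < ℓ, |(w (k + 1)).1 - (w k).1| + |(w (k + 1)).2 - (w k).2| = 1) ∧
  (∀ k < ℓ, ∀ m < ℓ, w k = w m → k = m)

/-- The distance-one neighborhood of the polygon `w`: points of `ℤ²` at `ℓ¹`-distance
at most `1` from a vertex of `w`. -/
def sapNbhd (ℓ : ℕ) (w : ℕ → ℤ × ℤ) : Set (ℤ × ℤ) :=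
  {z : ℤ × ℤ | ∃ k < ℓ, |z.1 - (w k).1| + |z.2 - (w k).2| ≤ 1}

/-!
Two vertices of a closed walk of length `ℓ` with unit steps split it into two arcs of total
length `ℓ`, and each arc bounds their distance, so the shorter one shows that they are at
distance at most `ℓ / 2`. Points of the distance-one neighborhood add at most `1` at each end.
The lattice distance is the metric of `WithLp 1 (ℤ × ℤ)`.
-/

section UnitStepWalk

variable {α : Type*} [PseudoMetricSpace α] {ℓ : ℕ} {w : ℕ → α}

theorem dist_le_sub_of_unit_steps (hstep : ∀ k < ℓ, dist (w k) (w (k + 1)) ≤ 1)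
    {m n : ℕ} (hmn : m ≤ n) (hn : n ≤ ℓ) : dist (w m) (w n) ≤ n - m := by
  calc dist (w m) (w n) ≤ ∑ _i ∈ Ico m n, (1 : ℝ) :=
        dist_le_Ico_sum_of_dist_le hmn fun _ hk => hstep _ (by omega)
    _ = n - m := by simp [Nat.cast_sub hmn]

theorem two_mul_dist_le_of_closed_unit_steps (hclosed : w ℓ = w 0)
    (hstep : ∀ k < ℓ, dist (w k) (w (k + 1)) ≤ 1) {k m : ℕ} (hk : k ≤ ℓ) (hm : m ≤ ℓ) :
    2 * dist (w k) (w m) ≤ ℓ := by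
  wlog hkm : k ≤ m generalizing k m
  · rw [dist_comm]
    exact this hm hk (by omega)
  have inner_arc := dist_le_sub_of_unit_steps hstep hkm hm
  have initial_arc := dist_le_sub_of_unit_steps hstep k.zero_le hk
  have final_arc := dist_le_sub_of_unit_steps hstep hm le_rfl
  have outer_arc : dist (w k) (w m) ≤ dist (w 0) (w k) + dist (w m) (w ℓ) := by
    rw [hclosed, dist_comm (w 0), dist_comm (w m)]
    exact dist_triangle _ _ _
  push_cast at initial_arc
  linarith

end UnitStepWalk

theorem dist_toLp_one_int_prod (p q : ℤ × ℤ) :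
    dist (WithLp.toLp 1 p) (WithLp.toLp 1 q) = ((|p.1 - q.1| + |p.2 - q.2| : ℤ) : ℝ) := by
  simp [WithLp.prod_dist_eq_of_L1, Int.dist_eq']

theorem sap_neighborhood_diameter_general (ℓ : ℕ) (w : ℕ → ℤ × ℤ)
    (hw : IsSAP ℓ w) :
    ∀ u ∈ sapNbhd ℓ w, ∀ v ∈ sapNbhd ℓ w,
      ((|u.1 - v.1| + |u.2 - v.2| : ℤ) : ℝ) ≤ (ℓ : ℝ) / 2 + 2 := by
  obtain ⟨hclosed, hstep, -⟩ := hw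
  let W : ℕ → WithLp 1 (ℤ × ℤ) := fun k => WithLp.toLp 1 (w k)
  have hstepW : ∀ k < ℓ, dist (W k) (W (k + 1)) ≤ 1 := fun k hk => by
    rw [dist_comm, dist_toLp_one_int_prod, hstep k hk, Int.cast_one]
  rintro u ⟨k, hk, hu⟩ v ⟨m, hm, hv⟩
  have near_u : dist (WithLp.toLp 1 u) (W k) ≤ 1 := by
    rw [dist_toLp_one_int_prod]; exact_mod_cast hu
  have near_v : dist (W m) (WithLp.toLp 1 v) ≤ 1 := by
    rw [dist_comm, dist_toLp_one_int_prod]; exact_mod_cast hv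
  have vertices_close := two_mul_dist_le_of_closed_unit_steps (w := W)
    (congrArg (WithLp.toLp 1) hclosed) hstepW hk.le hm.le
  rw [← dist_toLp_one_int_prod]
  linarith [dist_triangle4 (WithLp.toLp 1 u) (W k) (W m) (WithLp.toLp 1 v)]

theorem sap_neighborhood_diameter (ℓ : ℕ) (hℓ : 4 ≤ ℓ) (w : ℕ → ℤ × ℤ)
    (hw : IsSAP ℓ w) :
    ∀ u ∈ sapNbhd ℓ w, ∀ v ∈ sapNbhd ℓ w,
      ((|u.1 - v.1| + |u.2 - v.2| : ℤ) : ℝ) ≤ (ℓ : ℝ) / 2 + 2 :=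
  sap_neighborhood_diameter_general ℓ w hw
end
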